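/- For a finite dataset of N points with group assignment g and cluster assignment c such that every cluster is nonempty, K is nonempty, and the global group entropy H is strictly positive, the quantity MNCE = (min_{k∈K} H_k) / H satisfies 0 ≤ MNCE ≤ 1. -/

import Mathlib

/-! Writing `w_k = |c̃_k|/N` and `q_{t|k} = |g̃_t ∩ c̃_k|/|c̃_k|`, the group frequencies are the
mixtures `|g̃_t|/N = ∑ₖ w_k q_{t|k}`. Jensen's inequality for the concave function `-x log x`
then gives the conditional entropy bound `∑ₖ w_k H_k ≤ H`, and the minimum of the `H_k` is at
most their weighted mean. Each `H_k` is nonnegative because `q_{t|k} ∈ [0, 1]`. -/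

/-- Number of points in group `t`: `|g̃_t|` where `g̃_t = {i | g i = t}`. -/
def gcnt {N : ℕ} {T : Type*} [DecidableEq T] (g : Fin N → T) (t : T) : ℕ :=
  (Finset.univ.filter fun i => g i = t).card

/-- Number of points in cluster `k`: `|c̃_k|` where `c̃_k = {i | c i = k}`. -/
def ccnt {N : ℕ} {K : Type*} [DecidableEq K] (c : Fin N → K) (k : K) : ℕ :=
  (Finset.univ.filter fun i => c i = k).card

/-- Number of points in group `t` and cluster `k`: `|g̃_t ∩ c̃_k|`. -/
def gccnt {N : ℕ} {T K : Type*} [DecidableEq T] [DecidableEq K]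
    (g : Fin N → T) (c : Fin N → K) (t : T) (k : K) : ℕ :=
  (Finset.univ.filter fun i => g i = t ∧ c i = k).card

/-- Per-cluster group entropy
`H_k = -∑ t, (|g̃_t ∩ c̃_k|/|c̃_k|) log (|g̃_t ∩ c̃_k|/|c̃_k|)`
(natural log, `0 log 0 = 0`). -/
noncomputable def Hclu {N : ℕ} {T K : Type*} [Fintype T] [DecidableEq T] [DecidableEq K]
    (g : Fin N → T) (c : Fin N → K) (k : K) : ℝ :=
  -∑ t : T, ((gccnt g c t k : ℝ) / (ccnt c k : ℝ)) *
      Real.log ((gccnt g c t k : ℝ) / (ccnt c k : ℝ))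

/-- Global group entropy `H = -∑ t, (|g̃_t|/N) log (|g̃_t|/N)`
(natural log, `0 log 0 = 0`). -/
noncomputable def Hglob {N : ℕ} {T : Type*} [Fintype T] [DecidableEq T]
    (g : Fin N → T) : ℝ :=
  -∑ t : T, ((gcnt g t : ℝ) / (N : ℝ)) * Real.log ((gcnt g t : ℝ) / (N : ℝ))

open Finset Real

section
variable {N : ℕ} {T K : Type*}

lemma sum_ccnt [Fintype K] [DecidableEq K] (c : Fin N → K) : ∑ k, ccnt c k = N := by
  simpa [ccnt] using (card_eq_sum_card_fiberwise (s := univ) (t := univ) (f := c)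
    (fun _ _ => mem_univ _)).symm

lemma sum_gccnt [DecidableEq T] [Fintype K] [DecidableEq K] (g : Fin N → T) (c : Fin N → K)
    (t : T) : ∑ k, gccnt g c t k = gcnt g t := by
  simpa [gccnt, gcnt, filter_filter] using (card_eq_sum_card_fiberwise
    (s := univ.filter fun i => g i = t) (t := univ) (f := c) (fun _ _ => mem_univ _)).symm

lemma sum_ccnt_div_eq_one [Fintype K] [DecidableEq K] (c : Fin N → K) (hN : 0 < N) :
    ∑ k, (ccnt c k / N : ℝ) = 1 := by
  rw [← sum_div, ← Nat.cast_sum, sum_ccnt, div_self (by positivity)]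

lemma gccnt_le_ccnt [DecidableEq T] [DecidableEq K] (g : Fin N → T) (c : Fin N → K) (t : T)
    (k : K) : gccnt g c t k ≤ ccnt c k :=
  card_le_card fun i hi => by
    simp only [mem_filter] at hi ⊢
    exact ⟨hi.1, hi.2.2⟩

lemma ccnt_div_mul_gccnt_div [DecidableEq T] [DecidableEq K] (g : Fin N → T) (c : Fin N → K)
    (t : T) (k : K) :
    (ccnt c k / N : ℝ) * (gccnt g c t k / ccnt c k) = gccnt g c t k / N := by
  rcases Nat.eq_zero_or_pos (ccnt c k) with h | h
  · have : gccnt g c t k = 0 := Nat.eq_zero_of_le_zero (h ▸ gccnt_le_ccnt g c t k)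
    simp [h, this]
  · field_simp

variable [Fintype T] [DecidableEq T] [DecidableEq K]

lemma Hclu_eq_sum_negMulLog (g : Fin N → T) (c : Fin N → K) (k : K) :
    Hclu g c k = ∑ t, negMulLog (gccnt g c t k / ccnt c k) := by
  simp [Hclu, negMulLog_eq_neg, sum_neg_distrib]

lemma Hglob_eq_sum_negMulLog (g : Fin N → T) :
    Hglob g = ∑ t, negMulLog (gcnt g t / N) := by
  simp [Hglob, negMulLog_eq_neg, sum_neg_distrib]

lemma Hclu_nonneg (g : Fin N → T) (c : Fin N → K) (k : K) : 0 ≤ Hclu g c k := by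
  rw [Hclu_eq_sum_negMulLog]
  exact sum_nonneg fun t _ => negMulLog_nonneg (by positivity)
    (div_le_one_of_le₀ (by exact_mod_cast gccnt_le_ccnt g c t k) (by positivity))

theorem sum_ccnt_div_mul_Hclu_le_Hglob [Fintype K] (g : Fin N → T) (c : Fin N → K)
    (hN : 0 < N) : ∑ k, (ccnt c k / N : ℝ) * Hclu g c k ≤ Hglob g := by
  have hmixture (t : T) :
      ∑ k, (ccnt c k / N : ℝ) * (gccnt g c t k / ccnt c k) = gcnt g t / N := by
    simp only [ccnt_div_mul_gccnt_div, ← sum_div, ← Nat.cast_sum, sum_gccnt]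
  calc ∑ k, (ccnt c k / N : ℝ) * Hclu g c k
      = ∑ t, ∑ k, (ccnt c k / N : ℝ) * negMulLog (gccnt g c t k / ccnt c k) := by
        simp only [Hclu_eq_sum_negMulLog, mul_sum]
        exact sum_comm
    _ ≤ ∑ t, negMulLog (gcnt g t / N) := by
        refine sum_le_sum fun t _ => ?_
        rw [← hmixture]
        exact concaveOn_negMulLog.le_map_sum (fun _ _ => by positivity) (sum_ccnt_div_eq_one c hN)
          fun _ _ => Set.mem_Ici.2 (by positivity)
    _ = Hglob g := (Hglob_eq_sum_negMulLog g).symm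

end

theorem stmt12_general {N : ℕ} {T K : Type*} [Fintype T] [DecidableEq T] [Fintype K] [DecidableEq K]
    [Nonempty K]
    (g : Fin N → T) (c : Fin N → K) (hN : 0 < N) :
    0 ≤ Finset.univ.inf' Finset.univ_nonempty (fun k : K => Hclu g c k) / Hglob g ∧
    Finset.univ.inf' Finset.univ_nonempty (fun k : K => Hclu g c k) / Hglob g ≤ 1 := by
  set m := Finset.univ.inf' Finset.univ_nonempty (fun k : K => Hclu g c k)
  have hm_nonneg : 0 ≤ m := le_inf' _ _ fun k _ => Hclu_nonneg g c k
  have hm_le : m ≤ Hglob g :=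
    calc m = ∑ k, (ccnt c k / N : ℝ) * m := by
          rw [← sum_mul, sum_ccnt_div_eq_one c hN, one_mul]
      _ ≤ ∑ k, (ccnt c k / N : ℝ) * Hclu g c k :=
          sum_le_sum fun k _ => mul_le_mul_of_nonneg_left (inf'_le _ (mem_univ k)) (by positivity)
      _ ≤ Hglob g := sum_ccnt_div_mul_Hclu_le_Hglob g c hN
  have hH_nonneg : 0 ≤ Hglob g := hm_nonneg.trans hm_le
  exact ⟨div_nonneg hm_nonneg hH_nonneg, div_le_one_of_le₀ hm_le hH_nonneg⟩

/-- With strictly positive global group entropy `H`, the quantity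
`MNCE = (min_k H_k) / H` satisfies `0 ≤ MNCE ≤ 1`. -/
theorem stmt12 {N : ℕ} {T K : Type*} [Fintype T] [DecidableEq T] [Fintype K] [DecidableEq K]
    [Nonempty K]
    (g : Fin N → T) (c : Fin N → K) (hN : 0 < N)
    (hc : ∀ k : K, 0 < ccnt c k) (hH : 0 < Hglob g) :
    0 ≤ Finset.univ.inf' Finset.univ_nonempty (fun k : K => Hclu g c k) / Hglob g ∧
    Finset.univ.inf' Finset.univ_nonempty (fun k : K => Hclu g c k) / Hglob g ≤ 1 :=
  stmt12_general g c hN
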